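/- Consider the single-node general discrete model over horizon n. Define the greedy policy F* by: at slot k, given available energy U_k = m, transmit F*_k = q units where q ∈ {0,1,…,m} attains the maximum of log(1+j·h_k) + γ_{k+1}^{m−j} over j ∈ {0,1,…,m} (with the convention γ_{n+1}^j := 0 for all j). Then F* is admissible and maximizes the expected total payoff: P(F) ≤ P(F*) for every admissible policy F. -/

import Mathlib

open MeasureTheory ProbabilityTheory

namespace EHDiscrete

variable {Ω : Type*} [MeasurableSpace Ω]

/-- Carryover energy: `c 0 = 0`, `c k = min (c (k-1) + E k) B - F k`. -/
def carry (B : ℕ) (Earr F : ℕ → Ω → ℕ) : ℕ → Ω → ℕ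
  | 0 => fun _ => 0
  | k + 1 => fun ω => min (carry B Earr F k ω + Earr (k + 1) ω) B - F (k + 1) ω

/-- Available energy `U_k = min (c_{k-1} + E_k) B`. -/
def avail (B : ℕ) (Earr F : ℕ → Ω → ℕ) (k : ℕ) (ω : Ω) : ℕ :=
  min (carry B Earr F (k - 1) ω + Earr k ω) B

/-- The σ-algebra generated by the history `(E_1, …, E_k, h_1, …, h_k)`. -/
def hist (Earr : ℕ → Ω → ℕ) (h : ℕ → Ω → ℝ) (k : ℕ) : MeasurableSpace Ω :=
  MeasurableSpace.comap
    (fun ω => ((fun i : Fin k => Earr (i.1 + 1) ω), (fun i : Fin k => h (i.1 + 1) ω)))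
    inferInstance

/-- Admissible policy (general discrete consumption): `F_k ≤ U_k`
(hence `F_k ∈ {0, …, B}`), and `F_k` is a measurable function of
`(E_1, …, E_k, h_1, …, h_k)`. -/
def IsPolicy (n B : ℕ) (Earr : ℕ → Ω → ℕ) (h : ℕ → Ω → ℝ) (F : ℕ → Ω → ℕ) : Prop :=
  (∀ k, 1 ≤ k → k ≤ n → ∀ ω, F k ω ≤ avail B Earr F k ω) ∧
  (∀ k, 1 ≤ k → k ≤ n → Measurable[hist Earr h k] (F k))

/-- Expected total payoff `P(F) = E [∑_{k=1}^n log (1 + F_k h_k)]`. -/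
noncomputable def payoff (μ : Measure Ω) (n : ℕ) (h : ℕ → Ω → ℝ) (F : ℕ → Ω → ℕ) : ℝ :=
  ∫ ω, ∑ k ∈ Finset.Icc 1 n, Real.log (1 + (F k ω : ℝ) * h k ω) ∂μ

/-- `α^m(x) = max_{j ∈ {0, …, m}} (log (1 + j·x) + g (m - j))`. -/
noncomputable def alphaD (g : ℕ → ℝ) (m : ℕ) (x : ℝ) : ℝ :=
  (Finset.range (m + 1)).sup' (Finset.nonempty_range_iff.mpr (Nat.succ_ne_zero m))
    (fun j => Real.log (1 + (j : ℝ) * x) + g (m - j))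

/-- Values, indexed backwards: `gAuxD φ B pr j m = γ_{n-j}^m`, where
`γ_n^m = E[log (1 + h·min (m + E) B)]` and, for `k < n`,
`γ_k^m = ∑_{i=0}^{B-m-1} p_i E[α_{k+1}^{i+m}] + (∑_{i=B-m}^B p_i) E[α_{k+1}^B]`. -/
noncomputable def gAuxD (φ : Measure ℝ) (B : ℕ) (pr : ℕ → ℝ) : ℕ → ℕ → ℝ
  | 0, m => ∑ i ∈ Finset.range (B + 1),
      pr i * ∫ x, Real.log (1 + x * ((min (m + i) B : ℕ) : ℝ)) ∂φ
  | j + 1, m =>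
      (∑ i ∈ Finset.range (B - m),
        pr i * ∫ x, alphaD (fun l => gAuxD φ B pr j l) (i + m) x ∂φ)
        + (∑ i ∈ Finset.Icc (B - m) B, pr i)
          * ∫ x, alphaD (fun l => gAuxD φ B pr j l) B x ∂φ

/-- `γ_k^m` for slots `1 ≤ k ≤ n`, with the convention `γ_k^m = 0` for `k > n`. -/
noncomputable def gammaSlotD (n : ℕ) (φ : Measure ℝ) (B : ℕ) (pr : ℕ → ℝ) (k m : ℕ) : ℝ :=
  if k ≤ n then gAuxD φ B pr (n - k) m else 0

/-- A policy is greedy if, at each slot, the transmitted amount attains the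
maximum of `log (1 + j·h_k) + γ_{k+1}^{U_k - j}` over `j ∈ {0, …, U_k}`. -/
def IsGreedy (n B : ℕ) (φ : Measure ℝ) (pr : ℕ → ℝ) (Earr : ℕ → Ω → ℕ)
    (h : ℕ → Ω → ℝ) (F : ℕ → Ω → ℕ) : Prop :=
  ∀ k, 1 ≤ k → k ≤ n → ∀ ω, ∀ j ≤ avail B Earr F k ω,
    Real.log (1 + (j : ℝ) * h k ω) + gammaSlotD n φ B pr (k + 1) (avail B Earr F k ω - j)
      ≤ Real.log (1 + (F k ω : ℝ) * h k ω)
        + gammaSlotD n φ B pr (k + 1) (avail B Earr F k ω - F k ω)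

/-!
Backward induction. `γ_k^c` is the optimal expected payoff of slots `k, …, n` when `c` units
are carried into slot `k`. For any admissible policy, the pair `(E_k, h_k)` is independent of
the carried energy `c_{k-1}`, so integrating it out turns `α_k^{U_k}(h_k)` back into
`γ_k^{c_{k-1}}`; since `α_k^{U_k}(h_k) ≥ log (1 + F_k h_k) + γ_{k+1}^{c_k}` pointwise, with
equality for a greedy policy, the payoff telescopes to `γ_1^0` minus the expected gaps.
A greedy policy exists because the least maximiser is a measurable function of the state.
-/

section FiniteValued

lemma eq_sum_indicator_preimage {ι α : Type*} {X : ι → α} {s : Finset α} (hXs : ∀ i, X i ∈ s)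
    (f : α → ι → ℝ) (i : ι) :
    f (X i) i = ∑ a ∈ s, (X ⁻¹' {a}).indicator (f a) i := by
  classical
  simp only [Set.indicator_apply, Set.mem_preimage, Set.mem_singleton_iff]
  rw [Finset.sum_ite_eq s (X i) (fun a => f a i), if_pos (hXs i)]

variable {α β : Type*} [MeasurableSpace α] [MeasurableSingletonClass α] [MeasurableSpace β]
  {μ : Measure Ω} {X : Ω → α} {s : Finset α}

lemma integrable_comp_of_mem_finset (hX : Measurable X) (hXs : ∀ ω, X ω ∈ s)
    {f : α → Ω → ℝ} (hf : ∀ a ∈ s, Integrable (f a) μ) :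
    Integrable (fun ω => f (X ω) ω) μ := by
  simp_rw [eq_sum_indicator_preimage hXs f]
  exact integrable_finsetSum _ fun a ha => (hf a ha).indicator (hX (measurableSet_singleton a))

theorem integral_comp_eq_sum_of_indepFun {Y : Ω → β} (hXY : IndepFun X Y μ)
    (hX : Measurable X) (hY : Measurable Y) (hXs : ∀ ω, X ω ∈ s) {f : α → β → ℝ}
    (hf : ∀ a ∈ s, Measurable (f a)) (hfY : ∀ a ∈ s, Integrable (fun ω => f a (Y ω)) μ) :
    ∫ ω, f (X ω) (Y ω) ∂μ = ∑ a ∈ s, μ.real (X ⁻¹' {a}) * ∫ ω, f a (Y ω) ∂μ := by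
  simp_rw [eq_sum_indicator_preimage hXs (fun a ω => f a (Y ω))]
  rw [integral_finsetSum _ fun a ha => (hfY a ha).indicator (hX (measurableSet_singleton a))]
  refine Finset.sum_congr rfl fun a ha => ?_
  rw [integral_indicator (hX (measurableSet_singleton a))]
  exact ((IndepFun_iff_Indep X Y μ).1 hXY).setIntegral_eq_mul hX.comap_le hY.aemeasurable
    ⟨{a}, measurableSet_singleton a, rfl⟩ (hf a ha).aestronglyMeasurable

theorem integral_comp_eq_integral_integral_of_indepFun [IsProbabilityMeasure μ] {Y : Ω → β}
    (hXY : IndepFun X Y μ) (hX : Measurable X) (hY : Measurable Y) (hXs : ∀ ω, X ω ∈ s)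
    {f : α → β → ℝ} (hf : ∀ a ∈ s, Measurable (f a))
    (hfY : ∀ a ∈ s, Integrable (fun ω => f a (Y ω)) μ) :
    ∫ ω, f (X ω) (Y ω) ∂μ = ∫ ω, ∫ ω', f (X ω) (Y ω') ∂μ ∂μ := by
  rw [integral_comp_eq_sum_of_indepFun hXY hX hY hXs hf hfY,
    integral_comp_eq_sum_of_indepFun (indepFun_const_right X ()) hX measurable_const hXs
      (f := fun a _ => ∫ ω', f a (Y ω') ∂μ) (fun _ _ => measurable_const)
      (fun _ _ => integrable_const _)]
  simp

end FiniteValued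

section Alpha

lemma le_alphaD (g : ℕ → ℝ) {m j : ℕ} (hj : j ≤ m) (x : ℝ) :
    Real.log (1 + (j : ℝ) * x) + g (m - j) ≤ alphaD g m x :=
  Finset.le_sup' (fun j : ℕ => Real.log (1 + (j : ℝ) * x) + g (m - j))
    (Finset.mem_range.mpr (Nat.lt_succ_of_le hj))

lemma alphaD_le {g : ℕ → ℝ} {m : ℕ} {x c : ℝ}
    (hc : ∀ j ≤ m, Real.log (1 + (j : ℝ) * x) + g (m - j) ≤ c) : alphaD g m x ≤ c :=
  Finset.sup'_le _ _ fun j hj => hc j (Nat.lt_succ_iff.mp (Finset.mem_range.mp hj))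

lemma alphaD_eq_sup' (g : ℕ → ℝ) (m : ℕ) :
    alphaD g m = (Finset.range (m + 1)).sup' (Finset.nonempty_range_iff.mpr m.succ_ne_zero)
      (fun j x => Real.log (1 + (j : ℝ) * x) + g (m - j)) := by
  funext x
  rw [Finset.sup'_apply]
  rfl

lemma alphaD_const_zero {m : ℕ} {x : ℝ} (hx : 0 ≤ x) :
    alphaD (fun _ => 0) m x = Real.log (1 + (m : ℝ) * x) := by
  refine le_antisymm (alphaD_le fun j hj => ?_) (by simpa using le_alphaD (fun _ => 0) le_rfl x)
  have hjm : (j : ℝ) ≤ m := Nat.cast_le.mpr hj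
  rw [add_zero]
  exact Real.log_le_log (by positivity) (by nlinarith)

lemma measurable_log_one_add_mul (c : ℝ) : Measurable fun x : ℝ => Real.log (1 + c * x) :=
  Real.measurable_log.comp (measurable_const.add (measurable_const.mul measurable_id))

lemma measurable_alphaD (g : ℕ → ℝ) (m : ℕ) : Measurable (alphaD g m) := by
  rw [alphaD_eq_sup']
  exact Finset.measurable_sup' _ fun j _ => (measurable_log_one_add_mul j).add measurable_const

variable {φ : Measure ℝ} {B : ℕ}

lemma integrable_log_one_add_mul (hφ : ∀ᵐ x ∂φ, 0 ≤ x)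
    (hint : Integrable (fun x => Real.log (1 + (B : ℝ) * x)) φ) {j : ℕ} (hj : j ≤ B) :
    Integrable (fun x => Real.log (1 + (j : ℝ) * x)) φ := by
  refine hint.mono' (measurable_log_one_add_mul j).aestronglyMeasurable ?_
  filter_upwards [hφ] with x hx
  have hjB : (j : ℝ) ≤ B := Nat.cast_le.mpr hj
  have hjx : 0 ≤ (j : ℝ) * x := by positivity
  rw [Real.norm_eq_abs, abs_of_nonneg (Real.log_nonneg (by linarith))]
  exact Real.log_le_log (by linarith) (by nlinarith)

lemma integrable_alphaD [IsFiniteMeasure φ] (hφ : ∀ᵐ x ∂φ, 0 ≤ x)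
    (hint : Integrable (fun x => Real.log (1 + (B : ℝ) * x)) φ) (g : ℕ → ℝ) {m : ℕ}
    (hm : m ≤ B) : Integrable (alphaD g m) φ := by
  rw [alphaD_eq_sup']
  refine Finset.sup'_induction (p := fun f => Integrable f φ) _ _
    (fun _ hf _ hg => hf.sup hg) fun j hj => ?_
  have hjB : j ≤ B := (Nat.lt_succ_iff.mp (Finset.mem_range.mp hj)).trans hm
  exact (integrable_log_one_add_mul hφ hint hjB).add (integrable_const _)

end Alpha

section Bellman

/-- `bellman φ B pr γ_{k+1} = γ_k`: the recursion of `gAuxD`, with the overflow `min (m + i) B`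
kept inside the sum instead of split off. -/
noncomputable def bellman (φ : Measure ℝ) (B : ℕ) (pr : ℕ → ℝ) (g : ℕ → ℝ) (m : ℕ) : ℝ :=
  ∑ i ∈ Finset.range (B + 1), pr i * ∫ x, alphaD g (min (m + i) B) x ∂φ

lemma sum_range_mul_min_add {B m : ℕ} (hm : m ≤ B) (pr f : ℕ → ℝ) :
    ∑ i ∈ Finset.range (B + 1), pr i * f (min (m + i) B)
      = ∑ i ∈ Finset.range (B - m), pr i * f (i + m)
        + (∑ i ∈ Finset.Icc (B - m) B, pr i) * f B := by
  rw [← Finset.sum_range_add_sum_Ico _ (show B - m ≤ B + 1 by omega),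
    Finset.Ico_add_one_right_eq_Icc, Finset.sum_mul]
  congr 1
  · refine Finset.sum_congr rfl fun i hi => ?_
    rw [show min (m + i) B = i + m by have := Finset.mem_range.mp hi; omega]
  · refine Finset.sum_congr rfl fun i hi => ?_
    rw [show min (m + i) B = B by have := (Finset.mem_Icc.mp hi).1; omega]

variable {φ : Measure ℝ} {B : ℕ} {pr : ℕ → ℝ}

lemma gAuxD_zero (hφ : ∀ᵐ x ∂φ, 0 ≤ x) (m : ℕ) :
    gAuxD φ B pr 0 m = bellman φ B pr (fun _ => 0) m := by
  refine Finset.sum_congr rfl fun i _ => congrArg (pr i * ·) (integral_congr_ae ?_)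
  filter_upwards [hφ] with x hx
  rw [alphaD_const_zero hx, mul_comm]

lemma gAuxD_succ (j : ℕ) {m : ℕ} (hm : m ≤ B) :
    gAuxD φ B pr (j + 1) m = bellman φ B pr (gAuxD φ B pr j) m :=
  (sum_range_mul_min_add hm pr fun l => ∫ x, alphaD (gAuxD φ B pr j) l x ∂φ).symm

variable {n : ℕ}

lemma gammaSlotD_of_lt {k : ℕ} (hk : n < k) : gammaSlotD n φ B pr k = fun _ => 0 := by
  funext m
  simp [gammaSlotD, Nat.not_le.mpr hk]

lemma gammaSlotD_of_le {k : ℕ} (hk : k ≤ n) : gammaSlotD n φ B pr k = gAuxD φ B pr (n - k) := by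
  funext m
  simp [gammaSlotD, hk]

lemma gammaSlotD_eq_bellman (hφ : ∀ᵐ x ∂φ, 0 ≤ x) {k m : ℕ} (hk : k ≤ n) (hm : m ≤ B) :
    gammaSlotD n φ B pr k m = bellman φ B pr (gammaSlotD n φ B pr (k + 1)) m := by
  rw [gammaSlotD_of_le hk]
  rcases hk.eq_or_lt with rfl | hlt
  · rw [gammaSlotD_of_lt (Nat.lt_succ_self k), Nat.sub_self, gAuxD_zero hφ]
  · rw [gammaSlotD_of_le hlt, show n - k = n - (k + 1) + 1 by omega, gAuxD_succ _ hm]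

end Bellman

section OneSlot

lemma ae_nonneg_of_map_eq {μ : Measure Ω} {φ : Measure ℝ} {H : Ω → ℝ} (hH : Measurable H)
    (hpos : ∀ ω, 0 ≤ H ω) (hlaw : μ.map H = φ) : ∀ᵐ x ∂φ, 0 ≤ x :=
  hlaw ▸ (ae_map_iff hH.aemeasurable measurableSet_Ici).2 (.of_forall hpos)

variable {μ : Measure Ω} {φ : Measure ℝ} [IsFiniteMeasure φ] {B : ℕ} {pr : ℕ → ℝ}
  {E : Ω → ℕ} {H : Ω → ℝ}

lemma integrable_alphaD_comp (hH : Measurable H) (hlaw : μ.map H = φ) (hφ : ∀ᵐ x ∂φ, 0 ≤ x)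
    (hint : Integrable (fun x => Real.log (1 + (B : ℝ) * x)) φ) (g : ℕ → ℝ) {m : ℕ}
    (hm : m ≤ B) : Integrable (fun ω => alphaD g m (H ω)) μ :=
  (hlaw ▸ integrable_alphaD hφ hint g hm).comp_measurable hH

lemma integral_alphaD_min_add (hE : Measurable E) (hEB : ∀ ω, E ω ≤ B)
    (hEpr : ∀ i ≤ B, μ {ω | E ω = i} = .ofReal (pr i)) (hpr : ∀ i, 0 ≤ pr i)
    (hH : Measurable H) (hlaw : μ.map H = φ) (hφ : ∀ᵐ x ∂φ, 0 ≤ x)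
    (hint : Integrable (fun x => Real.log (1 + (B : ℝ) * x)) φ) (hEH : IndepFun E H μ)
    (g : ℕ → ℝ) (m : ℕ) :
    ∫ ω, alphaD g (min (m + E ω) B) (H ω) ∂μ = bellman φ B pr g m := by
  rw [integral_comp_eq_sum_of_indepFun hEH hE hH (s := Finset.range (B + 1))
    (fun ω => Finset.mem_range_succ_iff.mpr (hEB ω)) (fun _ _ => measurable_alphaD _ _)
    (fun _ _ => integrable_alphaD_comp hH hlaw hφ hint g (min_le_right _ _))]
  refine Finset.sum_congr rfl fun i hi => ?_
  rw [measureReal_def, show E ⁻¹' {i} = {ω | E ω = i} from rfl,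
    hEpr i (Finset.mem_range_succ_iff.mp hi), ENNReal.toReal_ofReal (hpr i), ← hlaw,
    integral_map hH.aemeasurable (measurable_alphaD _ _).aestronglyMeasurable]

variable [IsProbabilityMeasure μ] {c : Ω → ℕ}

lemma integral_alphaD_min_add_eq_integral_bellman (hc : Measurable c) (hcB : ∀ ω, c ω ≤ B)
    (hE : Measurable E) (hEB : ∀ ω, E ω ≤ B) (hEpr : ∀ i ≤ B, μ {ω | E ω = i} = .ofReal (pr i))
    (hpr : ∀ i, 0 ≤ pr i) (hH : Measurable H) (hlaw : μ.map H = φ) (hφ : ∀ᵐ x ∂φ, 0 ≤ x)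
    (hint : Integrable (fun x => Real.log (1 + (B : ℝ) * x)) φ) (hEH : IndepFun E H μ)
    (hcEH : IndepFun c (fun ω => (E ω, H ω)) μ) (g : ℕ → ℝ) :
    ∫ ω, alphaD g (min (c ω + E ω) B) (H ω) ∂μ = ∫ ω, bellman φ B pr g (c ω) ∂μ := by
  refine (integral_comp_eq_integral_integral_of_indepFun hcEH hc (hE.prodMk hH)
    (s := Finset.range (B + 1)) (f := fun m p => alphaD g (min (m + p.1) B) p.2)
    (fun ω => Finset.mem_range_succ_iff.mpr (hcB ω))
    (fun m _ => measurable_from_prod_countable_right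
      (f := fun p : ℕ × ℝ => alphaD g (min (m + p.1) B) p.2)
      fun i => measurable_alphaD g (min (m + i) B))
    (fun _ _ => integrable_comp_of_mem_finset hE (s := Finset.range (B + 1))
      (fun ω => Finset.mem_range_succ_iff.mpr (hEB ω))
      (fun _ _ => integrable_alphaD_comp hH hlaw hφ hint g (min_le_right _ _)))).trans ?_
  exact integral_congr_ae (.of_forall fun ω =>
    integral_alphaD_min_add hE hEB hEpr hpr hH hlaw hφ hint hEH g (c ω))

end OneSlot

section History

omit [MeasurableSpace Ω]

variable {Earr : ℕ → Ω → ℕ} {h : ℕ → Ω → ℝ}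

lemma hist_le {m : MeasurableSpace Ω} {k : ℕ} (hE : ∀ i : Fin k, Measurable[m] (Earr (i + 1)))
    (hh : ∀ i : Fin k, Measurable[m] (h (i + 1))) : hist Earr h k ≤ m :=
  ((measurable_pi_lambda _ hE).prodMk (measurable_pi_lambda _ hh)).comap_le

lemma measurable_Earr_hist {i k : ℕ} (hi : i < k) : Measurable[hist Earr h k] (Earr (i + 1)) :=
  Measurable.comp (g := fun p : (Fin k → ℕ) × (Fin k → ℝ) => p.1 ⟨i, hi⟩) (by fun_prop)
    (comap_measurable _)

lemma measurable_h_hist {i k : ℕ} (hi : i < k) : Measurable[hist Earr h k] (h (i + 1)) :=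
  Measurable.comp (g := fun p : (Fin k → ℕ) × (Fin k → ℝ) => p.2 ⟨i, hi⟩) (by fun_prop)
    (comap_measurable _)

lemma hist_mono {k l : ℕ} (hkl : k ≤ l) : hist Earr h k ≤ hist Earr h l :=
  hist_le (fun i => measurable_Earr_hist (i.2.trans_le hkl))
    (fun i => measurable_h_hist (i.2.trans_le hkl))

end History

section Independence

variable {Earr : ℕ → Ω → ℕ} {h : ℕ → Ω → ℝ}

lemma hist_le_of_measurable (hEm : ∀ k, Measurable (Earr k)) (hhm : ∀ k, Measurable (h k))
    (k : ℕ) : hist Earr h k ≤ ‹MeasurableSpace Ω› :=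
  hist_le (fun _ => hEm _) (fun _ => hhm _)

lemma indepFun_slot_of_measurable_hist {μ : Measure Ω} {n k : ℕ} (hk : k < n)
    (hEm : ∀ k, Measurable (Earr k)) (hhm : ∀ k, Measurable (h k))
    (hindep : iIndepFun (fun (k : Fin n) ω => (Earr (k.1 + 1) ω, h (k.1 + 1) ω)) μ)
    {c : Ω → ℕ} (hc : Measurable[hist Earr h k] c) :
    IndepFun c (fun ω => (Earr (k + 1) ω, h (k + 1) ω)) μ := by
  classical
  let S : Finset (Fin n) := Finset.univ.filter (·.1 < k)
  let T : Finset (Fin n) := {⟨k, hk⟩}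
  have hST : Disjoint S T := by simp [S, T]
  have hind := (IndepFun_iff_Indep _ _ μ).1
    (hindep.indepFun_finset S T hST fun j => (hEm _).prodMk (hhm _))
  have hcS : hist Earr h k ≤ MeasurableSpace.comap
      (fun ω (j : S) => (Earr (j.1.1 + 1) ω, h (j.1.1 + 1) ω)) inferInstance := by
    have hS (i : Fin k) : (⟨i, i.2.trans hk⟩ : Fin n) ∈ S := by simp [S]
    refine hist_le (fun i => ?_) (fun i => ?_)
    · exact Measurable.comp (g := fun v : S → ℕ × ℝ => (v ⟨_, hS i⟩).1) (by fun_prop)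
        (comap_measurable _)
    · exact Measurable.comp (g := fun v : S → ℕ × ℝ => (v ⟨_, hS i⟩).2) (by fun_prop)
        (comap_measurable _)
  refine (IndepFun_iff_Indep _ _ μ).2 (indep_of_indep_of_le_left
    (indep_of_indep_of_le_right hind ?_) (hc.comap_le.trans hcS))
  exact Measurable.comap_le <| Measurable.comp
    (g := fun v : T → ℕ × ℝ => v ⟨⟨k, hk⟩, Finset.mem_singleton_self _⟩) (by fun_prop)
    (comap_measurable fun ω (j : T) => (Earr (j.1.1 + 1) ω, h (j.1.1 + 1) ω))

end Independence

section Greedy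

lemma exists_greedy_spec (g : ℕ → ℝ) (m : ℕ) (x : ℝ) :
    ∃ j, j ≤ m ∧ ∀ i ≤ m, Real.log (1 + (i : ℝ) * x) + g (m - i)
      ≤ Real.log (1 + (j : ℝ) * x) + g (m - j) := by
  obtain ⟨j, hj, hmax⟩ := Finset.exists_max_image (Finset.range (m + 1))
    (fun j => Real.log (1 + (j : ℝ) * x) + g (m - j)) ⟨0, Finset.mem_range.mpr m.succ_pos⟩
  exact ⟨j, Finset.mem_range_succ_iff.mp hj, fun i hi => hmax i (Finset.mem_range_succ_iff.mpr hi)⟩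

/-- The least maximiser; choosing the least one makes it measurable in `x`. -/
noncomputable def greedyChoice (g : ℕ → ℝ) (m : ℕ) (x : ℝ) : ℕ :=
  Nat.find (exists_greedy_spec g m x)

lemma greedyChoice_le (g : ℕ → ℝ) (m : ℕ) (x : ℝ) : greedyChoice g m x ≤ m :=
  (Nat.find_spec (exists_greedy_spec g m x)).1

lemma le_greedyChoice (g : ℕ → ℝ) {m i : ℕ} (hi : i ≤ m) (x : ℝ) :
    Real.log (1 + (i : ℝ) * x) + g (m - i)
      ≤ Real.log (1 + (greedyChoice g m x : ℝ) * x) + g (m - greedyChoice g m x) :=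
  (Nat.find_spec (exists_greedy_spec g m x)).2 i hi

lemma measurable_greedyChoice (g : ℕ → ℝ) (m : ℕ) : Measurable (greedyChoice g m) := by
  refine measurable_find _ fun j => ?_
  simp only [Set.ofPred_and, Set.ofPred_forall]
  refine (MeasurableSet.const _).inter (.iInter fun _ => .iInter fun _ => measurableSet_le ?_ ?_)
    <;> exact (measurable_log_one_add_mul _).add measurable_const

lemma measurable_greedyChoice_comp {α : Type*} {m : MeasurableSpace α} (g : ℕ → ℝ) {M : α → ℕ}
    {X : α → ℝ} (hM : Measurable M) (hX : Measurable X) :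
    Measurable fun a => greedyChoice g (M a) (X a) :=
  (measurable_from_prod_countable_right (f := fun p : ℕ × ℝ => greedyChoice g p.1 p.2)
    (measurable_greedyChoice g)).comp (hM.prodMk hX)

end Greedy

section Policy

omit [MeasurableSpace Ω]

variable {Earr : ℕ → Ω → ℕ} {h : ℕ → Ω → ℝ} {B : ℕ}

lemma carry_le (F : ℕ → Ω → ℕ) (k : ℕ) (ω : Ω) : carry B Earr F k ω ≤ B := by
  cases k with
  | zero => exact Nat.zero_le B
  | succ k => exact (Nat.sub_le _ _).trans (min_le_right _ _)

lemma carry_succ (F : ℕ → Ω → ℕ) (k : ℕ) (ω : Ω) :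
    carry B Earr F (k + 1) ω = avail B Earr F (k + 1) ω - F (k + 1) ω := rfl

lemma measurable_min_add_Earr_hist {k : ℕ} {c : Ω → ℕ} (hc : Measurable[hist Earr h k] c) :
    Measurable[hist Earr h (k + 1)] fun ω => min (c ω + Earr (k + 1) ω) B :=
  (measurable_of_countable fun p : ℕ × ℕ => min (p.1 + p.2) B).comp
    ((hc.mono (hist_mono k.le_succ) le_rfl).prodMk (measurable_Earr_hist k.lt_succ_self))

lemma measurable_carry_hist {n : ℕ} {F : ℕ → Ω → ℕ}
    (hF : ∀ k, 1 ≤ k → k ≤ n → Measurable[hist Earr h k] (F k)) {k : ℕ} (hk : k ≤ n) :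
    Measurable[hist Earr h k] (carry B Earr F k) := by
  induction k with
  | zero => exact measurable_const
  | succ k ih =>
    exact (measurable_of_countable fun p : ℕ × ℕ => p.1 - p.2).comp
      ((measurable_min_add_Earr_hist (ih (by omega))).prodMk (hF (k + 1) k.succ_pos hk))

/-- The greedy policy needs its own carried energy, so that is defined first, by recursion. -/
noncomputable def greedyCarry (n B : ℕ) (φ : Measure ℝ) (pr : ℕ → ℝ) (Earr : ℕ → Ω → ℕ)
    (h : ℕ → Ω → ℝ) : ℕ → Ω → ℕ
  | 0 => fun _ => 0
  | k + 1 => fun ω =>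
      min (greedyCarry n B φ pr Earr h k ω + Earr (k + 1) ω) B
        - greedyChoice (gammaSlotD n φ B pr (k + 2))
            (min (greedyCarry n B φ pr Earr h k ω + Earr (k + 1) ω) B) (h (k + 1) ω)

noncomputable def greedyPolicy (n B : ℕ) (φ : Measure ℝ) (pr : ℕ → ℝ) (Earr : ℕ → Ω → ℕ)
    (h : ℕ → Ω → ℝ) (k : ℕ) (ω : Ω) : ℕ :=
  greedyChoice (gammaSlotD n φ B pr (k + 1))
    (min (greedyCarry n B φ pr Earr h (k - 1) ω + Earr k ω) B) (h k ω)

variable {n : ℕ} {φ : Measure ℝ} {pr : ℕ → ℝ}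

lemma carry_greedyPolicy (k : ℕ) :
    carry B Earr (greedyPolicy n B φ pr Earr h) k = greedyCarry n B φ pr Earr h k := by
  induction k with
  | zero => rfl
  | succ k ih =>
    funext ω
    simp only [carry, ih]
    rfl

lemma avail_greedyPolicy (k : ℕ) (ω : Ω) :
    avail B Earr (greedyPolicy n B φ pr Earr h) k ω
      = min (greedyCarry n B φ pr Earr h (k - 1) ω + Earr k ω) B := by
  rw [avail, carry_greedyPolicy]

lemma measurable_greedyCarry_hist :
    ∀ k, Measurable[hist Earr h k] (greedyCarry n B φ pr Earr h k)
  | 0 => measurable_const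
  | k + 1 =>
    have hU := measurable_min_add_Earr_hist (B := B) (measurable_greedyCarry_hist k)
    (measurable_of_countable fun p : ℕ × ℕ => p.1 - p.2).comp
      (hU.prodMk (measurable_greedyChoice_comp _ hU (measurable_h_hist k.lt_succ_self)))

lemma greedyPolicy_isPolicy : IsPolicy n B Earr h (greedyPolicy n B φ pr Earr h) := by
  refine ⟨fun k _ _ ω => (avail_greedyPolicy k ω).symm ▸ greedyChoice_le _ _ _,
    fun k hk _ => ?_⟩
  obtain ⟨k, rfl⟩ := Nat.exists_eq_add_of_le' hk
  exact measurable_greedyChoice_comp _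
    (measurable_min_add_Earr_hist (measurable_greedyCarry_hist k))
    (measurable_h_hist k.lt_succ_self)

lemma greedyPolicy_isGreedy : IsGreedy n B φ pr Earr h (greedyPolicy n B φ pr Earr h) := by
  intro k _ _ ω j hj
  rw [avail_greedyPolicy] at hj ⊢
  exact le_greedyChoice _ hj _

end Policy

structure IsDiscreteModel (μ : Measure Ω) (n B : ℕ) (pr : ℕ → ℝ) (φ : Measure ℝ)
    (h : ℕ → Ω → ℝ) (Earr : ℕ → Ω → ℕ) : Prop where
  pr_nonneg : ∀ i, 0 ≤ pr i
  measurable_h : ∀ k, Measurable (h k)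
  measurable_Earr : ∀ k, Measurable (Earr k)
  map_h : ∀ k, 1 ≤ k → k ≤ n → μ.map (h k) = φ
  h_nonneg : ∀ k ω, 0 ≤ h k ω
  integrable_log : Integrable (fun x => Real.log (1 + (B : ℝ) * x)) φ
  Earr_le : ∀ k ω, Earr k ω ≤ B
  measure_Earr_eq : ∀ k, 1 ≤ k → k ≤ n → ∀ i, i ≤ B →
    μ {ω | Earr k ω = i} = ENNReal.ofReal (pr i)
  iIndepFun_slots : iIndepFun (fun (k : Fin n) ω => (Earr (k.1 + 1) ω, h (k.1 + 1) ω)) μ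
  indepFun_Earr_h : ∀ k, 1 ≤ k → k ≤ n → IndepFun (Earr k) (h k) μ

section Gap

omit [MeasurableSpace Ω]

noncomputable def bellmanGap (n B : ℕ) (φ : Measure ℝ) (pr : ℕ → ℝ) (Earr : ℕ → Ω → ℕ)
    (h : ℕ → Ω → ℝ) (F : ℕ → Ω → ℕ) (k : ℕ) (ω : Ω) : ℝ :=
  alphaD (gammaSlotD n φ B pr (k + 1)) (avail B Earr F k ω) (h k ω)
    - (Real.log (1 + (F k ω : ℝ) * h k ω) + gammaSlotD n φ B pr (k + 1) (carry B Earr F k ω))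

variable {n B : ℕ} {φ : Measure ℝ} {pr : ℕ → ℝ} {Earr : ℕ → Ω → ℕ} {h : ℕ → Ω → ℝ}
  {F : ℕ → Ω → ℕ}

lemma bellmanGap_nonneg (hF : IsPolicy n B Earr h F) {t : ℕ} (ht : t < n) (ω : Ω) :
    0 ≤ bellmanGap n B φ pr Earr h F (t + 1) ω := by
  rw [bellmanGap, sub_nonneg, carry_succ]
  exact le_alphaD _ (hF.1 (t + 1) t.succ_pos ht ω) _

lemma bellmanGap_eq_zero (hF : IsPolicy n B Earr h F) (hG : IsGreedy n B φ pr Earr h F)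
    {t : ℕ} (ht : t < n) (ω : Ω) : bellmanGap n B φ pr Earr h F (t + 1) ω = 0 := by
  refine le_antisymm ?_ (bellmanGap_nonneg hF ht ω)
  rw [bellmanGap, sub_nonpos, carry_succ]
  exact alphaD_le fun j hj => hG (t + 1) t.succ_pos ht ω j hj

end Gap

lemma sum_Icc_one_eq_sum_range {M : Type*} [AddCommMonoid M] (f : ℕ → M) (n : ℕ) :
    ∑ k ∈ Finset.Icc 1 n, f k = ∑ t ∈ Finset.range n, f (t + 1) := by
  rw [Finset.range_eq_Ico, Finset.sum_Ico_add' f 0 n 1]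
  rfl

namespace IsDiscreteModel

variable {μ : Measure Ω} {n B : ℕ} {pr : ℕ → ℝ} {φ : Measure ℝ} {h : ℕ → Ω → ℝ}
  {Earr : ℕ → Ω → ℕ} {F : ℕ → Ω → ℕ}

lemma ae_nonneg (hM : IsDiscreteModel μ n B pr φ h Earr) {k : ℕ} (hk : 1 ≤ k) (hkn : k ≤ n) :
    ∀ᵐ x ∂φ, 0 ≤ x :=
  ae_nonneg_of_map_eq (hM.measurable_h k) (hM.h_nonneg k) (hM.map_h k hk hkn)

lemma measurable_carry (hM : IsDiscreteModel μ n B pr φ h Earr) (hF : IsPolicy n B Earr h F)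
    {t : ℕ} (ht : t ≤ n) : Measurable (carry B Earr F t) :=
  (measurable_carry_hist hF.2 ht).mono
    (hist_le_of_measurable hM.measurable_Earr hM.measurable_h t) le_rfl

lemma integrable_gammaSlotD_carry [IsFiniteMeasure μ] (hM : IsDiscreteModel μ n B pr φ h Earr)
    (hF : IsPolicy n B Earr h F) {t : ℕ} (ht : t ≤ n) (k : ℕ) :
    Integrable (fun ω => gammaSlotD n φ B pr k (carry B Earr F t ω)) μ :=
  integrable_comp_of_mem_finset (hM.measurable_carry hF ht) (s := Finset.range (B + 1))
    (fun ω => Finset.mem_range_succ_iff.2 (carry_le F t ω))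
    (f := fun m _ => gammaSlotD n φ B pr k m) fun _ _ => integrable_const _

lemma integrable_log_policy (hM : IsDiscreteModel μ n B pr φ h Earr)
    (hF : IsPolicy n B Earr h F) {t : ℕ} (ht : t < n) :
    Integrable (fun ω => Real.log (1 + (F (t + 1) ω : ℝ) * h (t + 1) ω)) μ :=
  integrable_comp_of_mem_finset ((hF.2 _ t.succ_pos ht).mono
      (hist_le_of_measurable hM.measurable_Earr hM.measurable_h _) le_rfl)
    (s := Finset.range (B + 1))
    (fun ω => Finset.mem_range_succ_iff.2 ((hF.1 _ t.succ_pos ht ω).trans (min_le_right _ _)))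
    (f := fun j ω => Real.log (1 + (j : ℝ) * h (t + 1) ω)) fun _ hj =>
      (hM.map_h _ t.succ_pos ht ▸ integrable_log_one_add_mul (hM.ae_nonneg t.succ_pos ht)
        hM.integrable_log (Finset.mem_range_succ_iff.1 hj)).comp_measurable (hM.measurable_h _)

lemma integrable_alphaD_avail [IsFiniteMeasure φ] (hM : IsDiscreteModel μ n B pr φ h Earr)
    (hF : IsPolicy n B Earr h F) {t : ℕ} (ht : t < n) (g : ℕ → ℝ) :
    Integrable (fun ω => alphaD g (avail B Earr F (t + 1) ω) (h (t + 1) ω)) μ :=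
  integrable_comp_of_mem_finset
    ((measurable_of_countable fun p : ℕ × ℕ => min (p.1 + p.2) B).comp
      ((hM.measurable_carry hF ht.le).prodMk (hM.measurable_Earr _)))
    (s := Finset.range (B + 1)) (fun _ => Finset.mem_range_succ_iff.2 (min_le_right _ _))
    (f := fun m ω => alphaD g m (h (t + 1) ω)) fun _ hm =>
      integrable_alphaD_comp (hM.measurable_h _) (hM.map_h _ t.succ_pos ht)
        (hM.ae_nonneg t.succ_pos ht) hM.integrable_log g (Finset.mem_range_succ_iff.1 hm)

lemma integral_alphaD_avail [IsProbabilityMeasure μ] [IsFiniteMeasure φ]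
    (hM : IsDiscreteModel μ n B pr φ h Earr) (hF : IsPolicy n B Earr h F) {t : ℕ} (ht : t < n) :
    ∫ ω, alphaD (gammaSlotD n φ B pr (t + 2)) (avail B Earr F (t + 1) ω) (h (t + 1) ω) ∂μ
      = ∫ ω, gammaSlotD n φ B pr (t + 1) (carry B Earr F t ω) ∂μ := by
  have hφ := hM.ae_nonneg t.succ_pos ht
  refine (integral_alphaD_min_add_eq_integral_bellman (hM.measurable_carry hF ht.le)
    (carry_le F t) (hM.measurable_Earr _) (hM.Earr_le _) (hM.measure_Earr_eq _ t.succ_pos ht)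
    hM.pr_nonneg (hM.measurable_h _) (hM.map_h _ t.succ_pos ht) hφ hM.integrable_log
    (hM.indepFun_Earr_h _ t.succ_pos ht)
    (indepFun_slot_of_measurable_hist ht hM.measurable_Earr hM.measurable_h hM.iIndepFun_slots
      (measurable_carry_hist hF.2 ht.le)) _).trans ?_
  exact integral_congr_ae (.of_forall fun ω => (gammaSlotD_eq_bellman hφ ht (carry_le F t ω)).symm)

lemma integral_bellmanGap [IsProbabilityMeasure μ] [IsFiniteMeasure φ]
    (hM : IsDiscreteModel μ n B pr φ h Earr) (hF : IsPolicy n B Earr h F) {t : ℕ} (ht : t < n) :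
    ∫ ω, bellmanGap n B φ pr Earr h F (t + 1) ω ∂μ
      = ∫ ω, gammaSlotD n φ B pr (t + 1) (carry B Earr F t ω) ∂μ
        - ∫ ω, Real.log (1 + (F (t + 1) ω : ℝ) * h (t + 1) ω) ∂μ
        - ∫ ω, gammaSlotD n φ B pr (t + 2) (carry B Earr F (t + 1) ω) ∂μ := by
  have hlog := hM.integrable_log_policy hF ht
  have hγ := hM.integrable_gammaSlotD_carry hF ht (t + 2)
  have hsplit : ∫ ω, bellmanGap n B φ pr Earr h F (t + 1) ω ∂μ
      = ∫ ω, alphaD (gammaSlotD n φ B pr (t + 2)) (avail B Earr F (t + 1) ω) (h (t + 1) ω) ∂μ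
        - (∫ ω, Real.log (1 + (F (t + 1) ω : ℝ) * h (t + 1) ω) ∂μ
          + ∫ ω, gammaSlotD n φ B pr (t + 2) (carry B Earr F (t + 1) ω) ∂μ) := by
    rw [← integral_add hlog hγ]
    exact integral_sub (hM.integrable_alphaD_avail hF ht _) (hlog.add hγ)
  rw [hsplit, hM.integral_alphaD_avail hF ht]
  ring

lemma payoff_add_sum_integral_bellmanGap [IsProbabilityMeasure μ] [IsFiniteMeasure φ]
    (hM : IsDiscreteModel μ n B pr φ h Earr) (hF : IsPolicy n B Earr h F) :
    payoff μ n h F + ∑ t ∈ Finset.range n, ∫ ω, bellmanGap n B φ pr Earr h F (t + 1) ω ∂μ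
      = gammaSlotD n φ B pr 1 0 := by
  have hpayoff : payoff μ n h F
      = ∑ t ∈ Finset.range n, ∫ ω, Real.log (1 + (F (t + 1) ω : ℝ) * h (t + 1) ω) ∂μ := by
    simp_rw [payoff, sum_Icc_one_eq_sum_range]
    exact integral_finsetSum _ fun t ht => hM.integrable_log_policy hF (Finset.mem_range.1 ht)
  calc _ = ∑ t ∈ Finset.range n, (∫ ω, gammaSlotD n φ B pr (t + 1) (carry B Earr F t ω) ∂μ
          - ∫ ω, gammaSlotD n φ B pr (t + 1 + 1) (carry B Earr F (t + 1) ω) ∂μ) := by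
        rw [hpayoff, ← Finset.sum_add_distrib]
        refine Finset.sum_congr rfl fun t ht => ?_
        rw [hM.integral_bellmanGap hF (Finset.mem_range.1 ht)]
        ring
    _ = gammaSlotD n φ B pr 1 0 := by
        rw [Finset.sum_range_sub'
          (fun t => ∫ ω, gammaSlotD n φ B pr (t + 1) (carry B Earr F t ω) ∂μ),
          gammaSlotD_of_lt n.lt_succ_self]
        simp [carry]

lemma payoff_le [IsProbabilityMeasure μ] [IsFiniteMeasure φ]
    (hM : IsDiscreteModel μ n B pr φ h Earr) (hF : IsPolicy n B Earr h F) :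
    payoff μ n h F ≤ gammaSlotD n φ B pr 1 0 := by
  rw [← hM.payoff_add_sum_integral_bellmanGap hF]
  exact le_add_of_nonneg_right (Finset.sum_nonneg fun t ht =>
    integral_nonneg (bellmanGap_nonneg hF (Finset.mem_range.1 ht)))

lemma payoff_eq_of_isGreedy [IsProbabilityMeasure μ] [IsFiniteMeasure φ]
    (hM : IsDiscreteModel μ n B pr φ h Earr) (hF : IsPolicy n B Earr h F)
    (hG : IsGreedy n B φ pr Earr h F) : payoff μ n h F = gammaSlotD n φ B pr 1 0 := by
  rw [← hM.payoff_add_sum_integral_bellmanGap hF, left_eq_add]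
  refine Finset.sum_eq_zero fun t ht => ?_
  simp [bellmanGap_eq_zero hF hG (Finset.mem_range.1 ht)]

end IsDiscreteModel

theorem greedy_policy_optimal_general
    (μ : Measure Ω) [IsProbabilityMeasure μ]
    (n B : ℕ)
    (pr : ℕ → ℝ) (hpr0 : ∀ i, 0 ≤ pr i)
    (φ : Measure ℝ) [IsProbabilityMeasure φ]
    (h : ℕ → Ω → ℝ) (Earr : ℕ → Ω → ℕ)
    (hhm : ∀ k, Measurable (h k)) (hEm : ∀ k, Measurable (Earr k))
    (hlaw : ∀ k, 1 ≤ k → k ≤ n → Measure.map (h k) μ = φ)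
    (hpos : ∀ k ω, 0 ≤ h k ω)
    (hint : Integrable (fun x => Real.log (1 + (B : ℝ) * x)) φ)
    (hEB : ∀ k ω, Earr k ω ≤ B)
    (hEpr : ∀ k, 1 ≤ k → k ≤ n → ∀ i, i ≤ B →
      μ {ω | Earr k ω = i} = ENNReal.ofReal (pr i))
    (hindep : iIndepFun
      (fun (k : Fin n) ω => (Earr (k.1 + 1) ω, h (k.1 + 1) ω)) μ)
    (hpair : ∀ k, 1 ≤ k → k ≤ n → IndepFun (Earr k) (h k) μ) :
    (∃ Fstar : ℕ → Ω → ℕ, IsPolicy n B Earr h Fstar ∧ IsGreedy n B φ pr Earr h Fstar) ∧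
    (∀ Fstar : ℕ → Ω → ℕ, IsPolicy n B Earr h Fstar → IsGreedy n B φ pr Earr h Fstar →
      ∀ F : ℕ → Ω → ℕ, IsPolicy n B Earr h F →
        payoff μ n h F ≤ payoff μ n h Fstar) := by
  have hM : IsDiscreteModel μ n B pr φ h Earr :=
    ⟨hpr0, hhm, hEm, hlaw, hpos, hint, hEB, hEpr, hindep, hpair⟩
  refine ⟨⟨greedyPolicy n B φ pr Earr h, greedyPolicy_isPolicy, greedyPolicy_isGreedy⟩,
    fun Fstar hstar hgreedy F hF => ?_⟩
  rw [hM.payoff_eq_of_isGreedy hstar hgreedy]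
  exact hM.payoff_le hF

/-- **Theorem 2** (single node, general discrete model). There is an
admissible greedy policy `F*` (transmitting, at each slot, an amount `q`
attaining `max_{j ≤ U_k} (log (1 + j·h_k) + γ_{k+1}^{U_k - j})`), and every
such policy maximizes the expected total payoff among admissible policies. -/
theorem greedy_policy_optimal
    (μ : Measure Ω) [IsProbabilityMeasure μ]
    (n B : ℕ) (hn : 1 ≤ n) (hB : 1 ≤ B)
    (pr : ℕ → ℝ) (hpr0 : ∀ i, 0 ≤ pr i)
    (hprsum : ∑ i ∈ Finset.range (B + 1), pr i = 1)
    (φ : Measure ℝ) [IsProbabilityMeasure φ]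
    (h : ℕ → Ω → ℝ) (Earr : ℕ → Ω → ℕ)
    (hhm : ∀ k, Measurable (h k)) (hEm : ∀ k, Measurable (Earr k))
    (hlaw : ∀ k, 1 ≤ k → k ≤ n → Measure.map (h k) μ = φ)
    (hpos : ∀ k ω, 0 ≤ h k ω)
    (hint : Integrable (fun x => Real.log (1 + (B : ℝ) * x)) φ)
    (hEB : ∀ k ω, Earr k ω ≤ B)
    (hEpr : ∀ k, 1 ≤ k → k ≤ n → ∀ i, i ≤ B →
      μ {ω | Earr k ω = i} = ENNReal.ofReal (pr i))
    (hindep : iIndepFun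
      (fun (k : Fin n) ω => (Earr (k.1 + 1) ω, h (k.1 + 1) ω)) μ)
    (hpair : ∀ k, 1 ≤ k → k ≤ n → IndepFun (Earr k) (h k) μ) :
    (∃ Fstar : ℕ → Ω → ℕ, IsPolicy n B Earr h Fstar ∧ IsGreedy n B φ pr Earr h Fstar) ∧
    (∀ Fstar : ℕ → Ω → ℕ, IsPolicy n B Earr h Fstar → IsGreedy n B φ pr Earr h Fstar →
      ∀ F : ℕ → Ω → ℕ, IsPolicy n B Earr h F →
        payoff μ n h F ≤ payoff μ n h Fstar) :=
  greedy_policy_optimal_general μ n B pr hpr0 φ h Earr hhm hEm hlaw hpos hint hEB hEpr hindep hpair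

end EHDiscrete
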